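/- arXiv:1610.01003 — 7 statements merged into one kernel-verified Lean document; each statement's English description precedes it below -/
import Mathlib

section
/- Let N be a positive even integer, K > 0, P ≥ 0, and let m be an integer with |2πm/N| < π/2. There exist θ₁, θ₂ ∈ [−π/2, π/2] satisfying sin θ₁ − sin θ₂ = P/K and θ₁ + θ₂ = 4πm/N if and only if P ≤ 2K·cos²(2πm/N); moreover, when such a pair exists it is unique and is given by θ₁ = arcsin(P/(2K·cos(2πm/N))) + 2πm/N and θ₂ = −arcsin(P/(2K·cos(2πm/N))) + 2πm/N. -/
open Real

/-- For a cyclic power grid with `N` nodes (`N` positive and even),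
`K > 0`, `P ≥ 0`, and an integer winding number `m` with `|2πm/N| < π/2`:
there exist `θ₁, θ₂ ∈ [−π/2, π/2]` with `sin θ₁ − sin θ₂ = P/K` and `θ₁ + θ₂ = 4πm/N`
iff `P ≤ 2K·cos²(2πm/N)`; moreover any such pair is unique and given by
`θ₁ = arcsin(P/(2K·cos(2πm/N))) + 2πm/N`, `θ₂ = −arcsin(P/(2K·cos(2πm/N))) + 2πm/N`. -/
theorem cyclic_grid_stable_equilibrium_iff
    (N : ℕ) (hN : 0 < N) (hNeven : Even N)
    (K P : ℝ) (hK : 0 < K) (hP : 0 ≤ P)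
    (m : ℤ) (hm : |2 * π * m / N| < π / 2) :
    ((∃ θ₁ θ₂ : ℝ, θ₁ ∈ Set.Icc (-(π / 2)) (π / 2) ∧ θ₂ ∈ Set.Icc (-(π / 2)) (π / 2) ∧
        Real.sin θ₁ - Real.sin θ₂ = P / K ∧ θ₁ + θ₂ = 4 * π * m / N) ↔
      P ≤ 2 * K * Real.cos (2 * π * m / N) ^ 2) ∧
    (∀ θ₁ θ₂ : ℝ, θ₁ ∈ Set.Icc (-(π / 2)) (π / 2) → θ₂ ∈ Set.Icc (-(π / 2)) (π / 2) →
        Real.sin θ₁ - Real.sin θ₂ = P / K → θ₁ + θ₂ = 4 * π * m / N →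
      θ₁ = Real.arcsin (P / (2 * K * Real.cos (2 * π * m / N))) + 2 * π * m / N ∧
      θ₂ = -Real.arcsin (P / (2 * K * Real.cos (2 * π * m / N))) + 2 * π * m / N) := by
  set c : ℝ := 2 * π * m / N with hc
  obtain ⟨hc1, hc2⟩ := abs_lt.mp hm
  have hcos : 0 < Real.cos c := Real.cos_pos_of_mem_Ioo ⟨by linarith, hc2⟩
  have habs : |c| < π / 2 := hm
  have habs0 : (0:ℝ) ≤ |c| := abs_nonneg c
  have hsum : (4 * π * m / N : ℝ) = 2 * c := by rw [hc]; ring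
  set s : ℝ := P / (2 * K * Real.cos c) with hs
  have hden : (0:ℝ) < 2 * K * Real.cos c := by positivity
  have hs0 : 0 ≤ s := div_nonneg hP hden.le
  -- membership of π/2 - |c| in [-π/2, π/2]
  have hmem : π / 2 - |c| ∈ Set.Icc (-(π/2)) (π/2) := ⟨by linarith, by linarith⟩
  have hsinpi : Real.sin (π / 2 - |c|) = Real.cos c := by
    rw [Real.sin_pi_div_two_sub, Real.cos_abs]
  -- key derivation for any solution pair
  have key : ∀ θ₁ θ₂ : ℝ, θ₁ ∈ Set.Icc (-(π / 2)) (π / 2) → θ₂ ∈ Set.Icc (-(π / 2)) (π / 2) →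
      Real.sin θ₁ - Real.sin θ₂ = P / K → θ₁ + θ₂ = 4 * π * m / N →
      (θ₁ = Real.arcsin s + c ∧ θ₂ = -Real.arcsin s + c) ∧
        P ≤ 2 * K * Real.cos c ^ 2 := by
    intro θ₁ θ₂ h1 h2 heq hsum'
    rw [hsum] at hsum'
    have hθ2 : θ₂ = 2 * c - θ₁ := by linarith
    set d : ℝ := θ₁ - c with hd
    have hsin : Real.sin θ₁ - Real.sin θ₂ = 2 * Real.sin d * Real.cos c := by
      rw [Real.sin_sub_sin]
      have e1 : (θ₁ - θ₂) / 2 = d := by rw [hθ2, hd]; ring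
      have e2 : (θ₁ + θ₂) / 2 = c := by rw [hθ2]; ring
      rw [e1, e2]
    have hsind : Real.sin d = s := by
      rw [hsin] at heq
      rw [eq_div_iff hK.ne'] at heq
      rw [hs, eq_div_iff hden.ne']
      linear_combination heq
    obtain ⟨h1a, h1b⟩ := h1
    obtain ⟨h2a, h2b⟩ := h2
    rw [hθ2] at h2a h2b
    have hdub : d ≤ π / 2 - |c| := by
      rcases abs_cases c with ⟨h, _⟩ | ⟨h, _⟩ <;> rw [h] <;> [linarith; linarith]
    have hdlb : -(π / 2 - |c|) ≤ d := by
      rcases abs_cases c with ⟨h, _⟩ | ⟨h, _⟩ <;> rw [h] <;> [linarith; linarith]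
    have hdmem : d ∈ Set.Icc (-(π/2)) (π/2) := ⟨by linarith, by linarith⟩
    have harc : Real.arcsin s = d := by
      rw [← hsind, Real.arcsin_sin hdmem.1 hdmem.2]
    have hsle : Real.sin d ≤ Real.cos c := by
      have := Real.strictMonoOn_sin.monotoneOn hdmem hmem hdub
      rwa [hsinpi] at this
    constructor
    · constructor
      · rw [harc, hd]; ring
      · rw [harc, hθ2, hd]; ring
    · have : s ≤ Real.cos c := hsind ▸ hsle
      have := (div_le_iff₀ hden).mp this
      calc P ≤ Real.cos c * (2 * K * Real.cos c) := this
        _ = 2 * K * Real.cos c ^ 2 := by ring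
  constructor
  · constructor
    · rintro ⟨θ₁, θ₂, h1, h2, heq, hsum'⟩
      exact (key θ₁ θ₂ h1 h2 heq hsum').2
    · intro hle
      -- construct the solution
      have hsle : s ≤ Real.cos c := by
        rw [hs, div_le_iff₀ hden]
        calc P ≤ 2 * K * Real.cos c ^ 2 := hle
          _ = Real.cos c * (2 * K * Real.cos c) := by ring
      have hs1 : s ≤ 1 := hsle.trans (Real.cos_le_one c)
      have hsm1 : -1 ≤ s := by linarith
      have harcub : Real.arcsin s ≤ π / 2 - |c| := by
        rw [← Real.arcsin_sin hmem.1 hmem.2]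
        exact Real.monotone_arcsin (by rw [hsinpi]; exact hsle)
      have harc0 : 0 ≤ Real.arcsin s := Real.arcsin_nonneg.mpr hs0
      refine ⟨Real.arcsin s + c, -Real.arcsin s + c, ⟨?_, ?_⟩, ⟨?_, ?_⟩, ?_, ?_⟩
      · rcases abs_cases c with ⟨h, _⟩ | ⟨h, _⟩ <;> rw [h] at harcub <;> linarith
      · rcases abs_cases c with ⟨h, _⟩ | ⟨h, _⟩ <;> rw [h] at harcub <;> linarith
      · rcases abs_cases c with ⟨h, _⟩ | ⟨h, _⟩ <;> rw [h] at harcub <;> linarith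
      · rcases abs_cases c with ⟨h, _⟩ | ⟨h, _⟩ <;> rw [h] at harcub <;> linarith
      · rw [Real.sin_sub_sin]
        have e1 : (Real.arcsin s + c - (-Real.arcsin s + c)) / 2 = Real.arcsin s := by ring
        have e2 : (Real.arcsin s + c + (-Real.arcsin s + c)) / 2 = c := by ring
        rw [e1, e2, Real.sin_arcsin hsm1 hs1, hs]
        field_simp
      · rw [hsum]; ring
  · intro θ₁ θ₂ h1 h2 heq hsum'
    exact (key θ₁ θ₂ h1 h2 heq hsum').1
end

section
/- Let N be a positive even integer, K > 0 and 0 < P < 2K. Then the number of integers m satisfying |2πm/N| < π/2 and P ≤ 2K·cos²(2πm/N) is exactly 1 + 2·⌊(N/(2π))·arccos(√(P/(2K)))⌋. Consequently, the cyclic power grid with alternating power injections P_i = (−1)^{i+1}P has exactly 1 + 2·⌊(N/(2π))·arccos(√(P/(2K)))⌋ stable equilibria of alternating type, one for each such winding number m. -/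
open Real

/-- For a cyclic power grid with `N` nodes (`N` positive and even),
`K > 0` and `0 < P < 2K`, the number of integer winding numbers `m` with
`|2πm/N| < π/2` and `P ≤ 2K·cos²(2πm/N)` is exactly
`1 + 2·⌊(N/(2π))·arccos(√(P/(2K)))⌋`; and for each such `m` there is exactly one
stable equilibrium pair `(θ₁, θ₂)` of alternating type. -/
theorem cyclic_grid_number_of_stable_equilibria
    (N : ℕ) (hN : 0 < N) (hNeven : Even N)
    (K P : ℝ) (hK : 0 < K) (hP : 0 < P) (hP2K : P < 2 * K) :
    (({m : ℤ | |2 * π * m / N| < π / 2 ∧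
        P ≤ 2 * K * Real.cos (2 * π * m / N) ^ 2}.ncard : ℤ)
      = 1 + 2 * ⌊((N : ℝ) / (2 * π)) * Real.arccos (Real.sqrt (P / (2 * K)))⌋) ∧
    (∀ m : ℤ, |2 * π * m / N| < π / 2 → P ≤ 2 * K * Real.cos (2 * π * m / N) ^ 2 →
      ∃! p : ℝ × ℝ, p.1 ∈ Set.Icc (-(π / 2)) (π / 2) ∧ p.2 ∈ Set.Icc (-(π / 2)) (π / 2) ∧
        Real.sin p.1 - Real.sin p.2 = P / K ∧ p.1 + p.2 = 4 * π * m / N) := by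
  have hπ : 0 < π := Real.pi_pos
  have hNR : (0:ℝ) < N := by exact_mod_cast hN
  constructor
  · -- counting part
    have hq0 : 0 < P / (2*K) := div_pos hP (by linarith)
    have hq1 : P / (2*K) < 1 := (div_lt_one (by linarith)).2 hP2K
    set s : ℝ := Real.sqrt (P / (2*K)) with hs
    have hs0 : 0 < s := Real.sqrt_pos.2 hq0
    have hs1 : s < 1 := by
      have : s < Real.sqrt 1 := Real.sqrt_lt_sqrt hq0.le hq1
      simpa using this
    set a : ℝ := Real.arccos s with ha
    have ha0 : 0 < a := Real.arccos_pos.2 hs1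
    have ha2 : a < π/2 := Real.arccos_lt_pi_div_two.2 hs0
    have hcos_a : Real.cos a = s := Real.cos_arccos (by linarith) hs1.le
    set t : ℝ := (N:ℝ) / (2*π) * a with ht
    have ht0 : 0 < t := by positivity
    set M : ℤ := ⌊t⌋ with hM
    have hM0 : 0 ≤ M := Int.le_floor.2 (by exact_mod_cast ht0.le)
    have hs2 : s ^ 2 = P / (2*K) := Real.sq_sqrt hq0.le
    have key : ∀ m : ℤ, (|2 * π * m / N| < π / 2 ∧
        P ≤ 2 * K * Real.cos (2 * π * m / N) ^ 2) ↔ |m| ≤ M := by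
      intro m
      have habs : |2 * π * (m:ℝ) / N| = 2 * π * |(m:ℝ)| / N := by
        rw [abs_div, abs_mul, abs_mul, abs_of_pos hπ, abs_of_pos hNR]
        norm_num
      constructor
      · rintro ⟨h1, h2⟩
        have hcpos : 0 < Real.cos (2 * π * m / N) := by
          apply Real.cos_pos_of_mem_Ioo
          constructor <;> [linarith [abs_lt.1 h1 |>.1]; exact (abs_lt.1 h1).2]
        have hsle : s ≤ Real.cos (2 * π * m / N) := by
          have h3 : P / (2*K) ≤ Real.cos (2 * π * m / N) ^ 2 := by
            rw [div_le_iff₀ (by linarith)]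
            linarith
          have := Real.sqrt_le_sqrt h3
          rwa [Real.sqrt_sq hcpos.le] at this
        have hxa : |2 * π * (m:ℝ) / N| ≤ a := by
          by_contra hcon
          push_neg at hcon
          have := Real.cos_lt_cos_of_nonneg_of_le_pi ha0.le
            (le_trans (le_of_lt h1) (by linarith)) hcon
          rw [Real.cos_abs] at this
          rw [hcos_a] at this
          linarith
        rw [habs, div_le_iff₀ hNR] at hxa
        rw [hM, Int.le_floor]
        push_cast
        rw [ht, div_mul_eq_mul_div, le_div_iff₀ (by linarith)]
        nlinarith [hxa]
      · intro hm
        have hmt : (|m| : ℝ) ≤ t := by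
          have := Int.le_floor.1 (hM ▸ hm)
          exact_mod_cast this
        push_cast at hmt
        have hxa : |2 * π * (m:ℝ) / N| ≤ a := by
          rw [habs, div_le_iff₀ hNR]
          rw [ht] at hmt
          rw [div_mul_eq_mul_div, le_div_iff₀ (by linarith)] at hmt
          nlinarith
        have h1 : |2 * π * (m:ℝ) / N| < π / 2 := lt_of_le_of_lt hxa ha2
        refine ⟨h1, ?_⟩
        have hcge : s ≤ Real.cos (2 * π * m / N) := by
          rw [← Real.cos_abs, ← hcos_a]
          exact Real.cos_le_cos_of_nonneg_of_le_pi (abs_nonneg _) (by linarith) hxa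
        have : P / (2*K) ≤ Real.cos (2 * π * m / N) ^ 2 := by
          rw [← hs2]
          exact pow_le_pow_left₀ hs0.le hcge 2
        rw [div_le_iff₀ (by linarith)] at this
        linarith
    have hset : {m : ℤ | |2 * π * m / N| < π / 2 ∧
        P ≤ 2 * K * Real.cos (2 * π * m / N) ^ 2}
        = ↑(Finset.Icc (-M) M) := by
      ext m
      rw [Set.mem_setOf_eq, key m]
      simp [Finset.mem_Icc, abs_le]
    rw [hset, Set.ncard_coe_finset, Int.card_Icc]
    rw [Int.toNat_of_nonneg (by linarith)]
    ring
  · -- existence and uniqueness part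
    intro m h1 h2
    set c : ℝ := 2 * π * m / N with hc
    have hcabs : |c| < π / 2 := h1
    have hcos : 0 < Real.cos c :=
      Real.cos_pos_of_mem_Ioo ⟨(abs_lt.1 hcabs).1, (abs_lt.1 hcabs).2⟩
    set r : ℝ := P / (2 * K * Real.cos c) with hr
    have hr0 : 0 < r := div_pos hP (by positivity)
    have hrc : r ≤ Real.cos c := by
      rw [hr, div_le_iff₀ (by positivity)]
      nlinarith
    have hr1 : r ≤ 1 := hrc.trans (Real.cos_le_one c)
    set α : ℝ := Real.arcsin r with hα
    have hsinα : Real.sin α = r := Real.sin_arcsin (by linarith) hr1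
    have hα0 : 0 < α := Real.arcsin_pos.2 hr0
    have hα2 : α ≤ π / 2 := Real.arcsin_le_pi_div_two r
    have hαc : α + |c| ≤ π / 2 := by
      have hmem : Real.arcsin (Real.sin (π/2 - |c|)) = π/2 - |c| :=
        Real.arcsin_sin (by linarith [abs_nonneg c]) (by linarith [abs_nonneg c])
      have hmono : α ≤ Real.arcsin (Real.sin (π/2 - |c|)) := by
        apply Real.monotone_arcsin
        rw [Real.sin_pi_div_two_sub, Real.cos_abs]
        exact hrc
      linarith [hmono.trans_eq hmem]
    have hcle : c ≤ |c| := le_abs_self c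
    have hcge : -|c| ≤ c := neg_abs_le c
    refine ⟨(c + α, c - α), ⟨⟨by linarith, by linarith⟩, ⟨by linarith, by linarith⟩, ?_, ?_⟩, ?_⟩
    · show Real.sin (c + α) - Real.sin (c - α) = P / K
      rw [Real.sin_add, Real.sin_sub, hsinα]
      rw [hr]
      field_simp
      ring
    · show (c + α) + (c - α) = 4 * π * m / N
      rw [hc]; ring
    · rintro ⟨θ₁, θ₂⟩ ⟨⟨hθ1a, hθ1b⟩, ⟨hθ2a, hθ2b⟩, hsin, hsum⟩
      have hsum' : θ₁ + θ₂ = 2 * c := by rw [hc]; rw [hsum]; ring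
      have hdiff : Real.sin (θ₁ - c) = r := by
        have hss : Real.sin θ₁ - Real.sin θ₂
            = 2 * Real.sin ((θ₁ - θ₂)/2) * Real.cos ((θ₁ + θ₂)/2) := Real.sin_sub_sin θ₁ θ₂
        have e1 : (θ₁ + θ₂)/2 = c := by linarith
        have e2 : (θ₁ - θ₂)/2 = θ₁ - c := by linarith
        rw [e1, e2, hsin] at hss
        rw [hr, eq_div_iff (by positivity : (2 : ℝ) * K * Real.cos c ≠ 0)]
        rw [div_eq_iff hK.ne'] at hss
        linear_combination -hss
      have hb1 : -(π/2) ≤ θ₁ - c := by linarith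
      have hb2 : θ₁ - c ≤ π/2 := by linarith
      have : θ₁ - c = α := by
        rw [hα, ← hdiff]
        exact (Real.arcsin_sin hb1 hb2).symm
      have hθ1 : θ₁ = c + α := by linarith
      have hθ2 : θ₂ = c - α := by linarith
      rw [Prod.mk.injEq]
      exact ⟨hθ1, hθ2⟩
end

section
/- Let N ≥ 4 be even and a, b > 0. Let L′ be the weighted cycle Laplacian with edge weights w₁ = −a, w_i = a for odd i ≥ 3, and w_i = b for even i. Then L′ has exactly one positive eigenvalue, counted with multiplicity (in particular, the synchronous state in which exactly one phase difference exceeds π/2 (mod 2π) is a type-1 saddle). -/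
/-!
The quadratic form of the cycle Laplacian is `x ↦ -∑ wᵢ (xᵢ - xᵢ₊₁)²`. Every weight except
`w₀ = -a` is positive, so the form is `≤ 0` on the hyperplane `x₀ = x₁`; as two orthonormal
eigenvectors with positive eigenvalues would span a plane on which the form is positive definite,
and that plane meets the hyperplane, there is at most one positive eigenvalue. The test vector
`e₁ + (b / (a + b)) e₂` has form value `a² / (a + b) > 0`, so there is at least one.
-/

open Real Matrix

/-- The weighted cycle Laplacian on `N` nodes (indices mod `N`): the symmetric matrix
with `L i (i+1) = L (i+1) i = w i`, `L i i = −(w (i−1) + w i)` and all other entries `0`. -/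
def cycleLaplacian (N : ℕ) [NeZero N] (w : Fin N → ℝ) : Matrix (Fin N) (Fin N) ℝ :=
  Matrix.of fun i j =>
    if i = j then -(w (i - 1) + w i)
    else if j = i + 1 then w i
    else if i = j + 1 then w j
    else 0

open Finset

namespace Matrix.IsHermitian

variable {n : Type*} [Fintype n] [DecidableEq n] {A : Matrix n n ℝ} (hA : A.IsHermitian)
include hA

lemma card_filter_roots_charpoly (p : ℝ → Prop) [DecidablePred p] :
    (A.charpoly.roots.filter p).card = #{i | p (hA.eigenvalues i)} := by
  rw [hA.roots_charpoly_eq_eigenvalues, Multiset.filter_map, Multiset.card_map]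
  rfl

lemma dotProduct_eigenvectorBasis (i j : n) :
    ⇑(hA.eigenvectorBasis i) ⬝ᵥ ⇑(hA.eigenvectorBasis j) = if i = j then 1 else 0 := by
  rw [← orthonormal_iff_ite.mp hA.eigenvectorBasis.orthonormal i j,
    EuclideanSpace.inner_eq_star_dotProduct, star_trivial, dotProduct_comm]

lemma dotProduct_mulVec_eigenvector_combination {i j : n} (hij : i ≠ j) (c d : ℝ) :
    (c • ⇑(hA.eigenvectorBasis i) + d • ⇑(hA.eigenvectorBasis j)) ⬝ᵥ
      A *ᵥ (c • ⇑(hA.eigenvectorBasis i) + d • ⇑(hA.eigenvectorBasis j)) =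
      hA.eigenvalues i * c ^ 2 + hA.eigenvalues j * d ^ 2 := by
  simp only [mulVec_add, mulVec_smul, hA.mulVec_eigenvectorBasis, dotProduct_add, add_dotProduct,
    dotProduct_smul, smul_dotProduct, hA.dotProduct_eigenvectorBasis, if_neg hij,
    if_neg hij.symm, if_pos, smul_eq_mul]
  ring

lemma exists_eigenvalues_pos_of_dotProduct_mulVec_pos {x : n → ℝ} (hx : 0 < x ⬝ᵥ A *ᵥ x) : ∃ i, 0 < hA.eigenvalues i := by
  by_contra! h
  have hneg : (-A).PosSemidef := by
    refine posSemidef_iff_isHermitian_and_spectrum_nonneg.mpr ⟨hA.neg, ?_⟩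
    rintro μ hμ
    rw [← spectrum.neg_eq, Set.mem_neg, hA.spectrum_real_eq_range_eigenvalues] at hμ
    obtain ⟨i, hi⟩ := hμ
    simpa [hi] using h i
  have := hneg.dotProduct_mulVec_nonneg x
  simp only [star_trivial, neg_mulVec, dotProduct_neg] at this
  linarith

lemma card_filter_eigenvalues_pos_le_one (f : (n → ℝ) →ₗ[ℝ] ℝ)
    (hf : ∀ y, f y = 0 → y ⬝ᵥ A *ᵥ y ≤ 0) : #{i | 0 < hA.eigenvalues i} ≤ 1 := by
  refine card_le_one.mpr fun i hi j hj => ?_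
  rw [mem_filter] at hi hj
  by_contra hij
  set u := ⇑(hA.eigenvectorBasis i)
  set v := ⇑(hA.eigenvectorBasis j)
  obtain ⟨c, d, hcd, hf₀⟩ : ∃ c d : ℝ, (c ≠ 0 ∨ d ≠ 0) ∧ f (c • u + d • v) = 0 := by
    by_cases hu : f u = 0
    · exact ⟨1, 0, Or.inl one_ne_zero, by simp [hu]⟩
    · exact ⟨f v, -f u, Or.inr (neg_ne_zero.mpr hu), by simp [mul_comm]⟩
  have hQ := hf _ hf₀
  rw [hA.dotProduct_mulVec_eigenvector_combination hij] at hQ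
  have hi' := mul_nonneg hi.2.le (sq_nonneg c)
  have hj' := mul_nonneg hj.2.le (sq_nonneg d)
  rcases hcd with hc | hd
  · linarith [mul_pos hi.2 (by positivity : 0 < c ^ 2)]
  · linarith [mul_pos hj.2 (by positivity : 0 < d ^ 2)]

end Matrix.IsHermitian

section CycleLaplacian

variable {N : ℕ} [NeZero N]

lemma Fin.one_add_one_ne_zero (hN : 2 < N) : (1 + 1 : Fin N) ≠ 0 := by
  rw [Ne, Fin.ext_iff, Fin.val_add, Fin.val_one', Nat.one_mod_eq_one.mpr (by omega), Fin.val_zero,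
    Nat.mod_eq_of_lt (by omega)]
  omega

lemma Fin.add_one_ne_self (hN : 1 < N) (i : Fin N) : i + 1 ≠ i := by
  rw [Ne, add_eq_left, Fin.one_eq_zero_iff]; omega

lemma Fin.sub_one_ne_self (hN : 1 < N) (i : Fin N) : i - 1 ≠ i := by
  rw [Ne, sub_eq_self, Fin.one_eq_zero_iff]; omega

lemma Fin.add_one_add_one_ne_self (hN : 2 < N) (i : Fin N) : i + 1 + 1 ≠ i := by
  rw [Ne, add_assoc, add_eq_left]
  exact Fin.one_add_one_ne_zero hN

lemma Fin.add_one_ne_sub_one (hN : 2 < N) (i : Fin N) : i + 1 ≠ i - 1 := by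
  rw [Ne, eq_sub_iff_add_eq]
  exact Fin.add_one_add_one_ne_self hN i

lemma cycleLaplacian_apply (hN : 2 < N) (w : Fin N → ℝ) (i j : Fin N) :
    cycleLaplacian N w i j = (if j = i + 1 then w i else 0) + (if j = i - 1 then w (i - 1) else 0)
      - (if j = i then w (i - 1) + w i else 0) := by
  have := Fin.add_one_ne_self (by omega) i
  have := Fin.sub_one_ne_self (by omega) i
  have := Fin.add_one_ne_sub_one hN i
  have : i = j + 1 ↔ j = i - 1 := by rw [eq_sub_iff_add_eq, eq_comm]
  simp only [cycleLaplacian, of_apply]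
  split_ifs <;> grind

lemma cycleLaplacian_isHermitian (hN : 2 < N) (w : Fin N → ℝ) :
    (cycleLaplacian N w).IsHermitian := by
  ext i j
  simp only [conjTranspose_apply, star_trivial, cycleLaplacian_apply hN]
  have : i = j + 1 ↔ j = i - 1 := by rw [eq_sub_iff_add_eq, eq_comm]
  have : j = i + 1 ↔ i = j - 1 := by rw [eq_sub_iff_add_eq, eq_comm]
  split_ifs <;> grind

lemma cycleLaplacian_mulVec_apply (hN : 2 < N) (w x : Fin N → ℝ) (i : Fin N) :
    (cycleLaplacian N w *ᵥ x) i = w i * (x (i + 1) - x i) + w (i - 1) * (x (i - 1) - x i) := by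
  simp only [mulVec, dotProduct, cycleLaplacian_apply hN, sub_mul, add_mul, ite_mul, zero_mul,
    sum_sub_distrib, sum_add_distrib, sum_ite_eq', mem_univ, if_true]
  ring

lemma dotProduct_cycleLaplacian_mulVec (hN : 2 < N) (w x : Fin N → ℝ) :
    x ⬝ᵥ cycleLaplacian N w *ᵥ x = -∑ i, w i * (x i - x (i + 1)) ^ 2 := by
  have shift : ∑ i, x i * (w (i - 1) * (x (i - 1) - x i)) =
      ∑ i, x (i + 1) * (w i * (x i - x (i + 1))) :=
    (Fintype.sum_equiv (Equiv.addRight 1) _ _ fun i => by simp).symm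
  simp only [dotProduct, cycleLaplacian_mulVec_apply hN, mul_add, sum_add_distrib, shift]
  rw [← sum_add_distrib, ← sum_neg_distrib]
  congr 1 with i
  ring

lemma dotProduct_cycleLaplacian_mulVec_nonpos (hN : 2 < N) {w x : Fin N → ℝ} (k₀ : Fin N)
    (hw : ∀ k ≠ k₀, 0 ≤ w k) (hx : x k₀ = x (k₀ + 1)) : x ⬝ᵥ cycleLaplacian N w *ᵥ x ≤ 0 := by
  rw [dotProduct_cycleLaplacian_mulVec hN, neg_nonpos]
  refine sum_nonneg fun k _ => ?_
  by_cases hk : k = k₀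
  · simp [hk, hx]
  · exact mul_nonneg (hw k hk) (sq_nonneg _)

lemma dotProduct_cycleLaplacian_mulVec_single_add_single (hN : 2 < N) (w : Fin N → ℝ)
    (k₀ : Fin N) (t : ℝ) :
    (Pi.single (k₀ + 1) 1 + Pi.single (k₀ + 1 + 1) t : Fin N → ℝ) ⬝ᵥ
      cycleLaplacian N w *ᵥ (Pi.single (k₀ + 1) 1 + Pi.single (k₀ + 1 + 1) t) =
      -(w k₀ + w (k₀ + 1) * (1 - t) ^ 2 + w (k₀ + 1 + 1) * t ^ 2) := by
  rw [dotProduct_cycleLaplacian_mulVec hN, ← sum_subset (subset_univ {k₀, k₀ + 1, k₀ + 1 + 1})]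
  · have h1 := Fin.add_one_ne_self (by omega : 1 < N)
    have h2 := Fin.add_one_add_one_ne_self hN
    rw [sum_insert (by simp [(h1 k₀).symm, (h2 k₀).symm]), sum_pair (h1 (k₀ + 1)).symm]
    simp only [Pi.add_apply, ne_eq, h1, h2, not_false_eq_true, Pi.single_eq_same,
      Pi.single_eq_of_ne, Pi.single_eq_of_ne', add_zero, zero_add, zero_sub, sub_zero, even_two,
      Even.neg_pow, one_pow, mul_one]
    ring
  · intro k _ hk
    simp only [mem_insert, mem_singleton, not_or] at hk
    simp [hk]

end CycleLaplacian

theorem cycleLaplacian_one_flipped_edge_one_positive_eigenvalue_general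
    (N : ℕ) [NeZero N] (hN : 4 ≤ N)
    (a b : ℝ) (ha : 0 < a) (hb : 0 < b) :
    ((cycleLaplacian N fun k =>
        if (k : ℕ) = 0 then -a
        else if (k : ℕ) % 2 = 0 then a
        else b).charpoly.roots.filter (fun x => 0 < x)).card = 1 := by
  set w : Fin N → ℝ := fun k => if (k : ℕ) = 0 then -a else if (k : ℕ) % 2 = 0 then a else b
  have hN₂ : 2 < N := by omega
  have hw : ∀ k ≠ 0, 0 ≤ w k := fun k hk => by
    simp only [w, Fin.val_eq_zero_iff, if_neg hk]
    split_ifs <;> positivity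
  have hA := cycleLaplacian_isHermitian hN₂ w
  rw [hA.card_filter_roots_charpoly]
  refine le_antisymm (hA.card_filter_eigenvalues_pos_le_one (.proj 0 - .proj 1) fun y hy => ?_) ?_
  · exact dotProduct_cycleLaplacian_mulVec_nonpos hN₂ 0 hw (by simpa [sub_eq_zero] using hy)
  · have h1 : ((1 : Fin N) : ℕ) = 1 := (Fin.val_one' N).trans (Nat.mod_eq_of_lt (by omega))
    have h2 : ((1 + 1 : Fin N) : ℕ) = 2 := by rw [Fin.val_add, h1]; exact Nat.mod_eq_of_lt (by omega)
    have hw₀ : w 0 = -a := by simp [w]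
    have hw₁ : w (0 + 1) = b := by simp only [w, zero_add, h1]; norm_num
    have hw₂ : w (0 + 1 + 1) = a := by simp only [w, zero_add, h2]; norm_num
    have hQ : -(w 0 + w (0 + 1) * (1 - b / (a + b)) ^ 2 + w (0 + 1 + 1) * (b / (a + b)) ^ 2) =
        a ^ 2 / (a + b) := by
      rw [hw₀, hw₁, hw₂]
      field_simp
      ring
    rw [← dotProduct_cycleLaplacian_mulVec_single_add_single hN₂] at hQ
    obtain ⟨i, hi⟩ := hA.exists_eigenvalues_pos_of_dotProduct_mulVec_pos (by rw [hQ]; positivity)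
    exact card_pos.mpr ⟨i, by simpa using hi⟩

/-- Let `N ≥ 4` be even and `a, b > 0`. The weighted cycle Laplacian `L′`
with edge weights `w₁ = −a`, `wᵢ = a` for odd `i ≥ 3`, `wᵢ = b` for even `i`
(in `Fin N`, index `k` stands for edge `k+1`) has exactly one positive eigenvalue,
counted with multiplicity (i.e. exactly one positive root of its characteristic
polynomial, with multiplicity): one flipped phase difference gives a type-1 saddle. -/
theorem cycleLaplacian_one_flipped_edge_one_positive_eigenvalue
    (N : ℕ) [NeZero N] (hN : 4 ≤ N) (hNeven : Even N)
    (a b : ℝ) (ha : 0 < a) (hb : 0 < b) :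
    ((cycleLaplacian N fun k =>
        if (k : ℕ) = 0 then -a
        else if (k : ℕ) % 2 = 0 then a
        else b).charpoly.roots.filter (fun x => 0 < x)).card = 1 :=
  cycleLaplacian_one_flipped_edge_one_positive_eigenvalue_general N hN a b ha hb
end

section
/- Let N > 4 be even, K > 0, 0 ≤ P < 2K, and set θ₁ = arcsin(P/(2K)) and θ₂ = −θ₁. Let θ̂₁ ∈ [−π/2, θ₁] and θ̂₂ ∈ [−π/2, θ₂], and define ΔV_I = −(K N/2)·(cos θ̂₁ − cos θ₁) − (K N/2)·(cos θ̂₂ − cos θ₂) + 2K·cos θ̂₁ − (N P/4)·((θ̂₁ − θ₁) − (θ̂₂ − θ₂)) + (θ̂₁ − π/2)·P. Then ΔV_I ≥ √(4K² − P²) + P·(arcsin(P/(2K)) − π/2); that is, the energy barrier of the cyclic network is at least the energy barrier ΔV_I^T = (P/2)·(−π + 2·arcsin(P/(2K))) + √(4K² − P²) of a tree network line carrying the same line load P/2. -/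
/-!
With `u x = 2K cos x + P x`, `w x = 2K cos x - P x` and `θ₁ = arcsin (P / (2K))`, the barrier
difference `ΔV_I - ΔV_I^T` equals `(N/4 - 1) (u θ₁ - u θ̂₁) + (N/4) (w (-θ₁) - w θ̂₂)`, using
`√(4K² - P²) = 2K cos θ₁`. Since `x ↦ K cos x + P x` increases on `[-π/2, arcsin (P/K)]`
(its derivative `P - K sin x` is nonnegative there), both brackets are nonnegative
once `N ≥ 4`.
-/

open Real

open Set in
theorem monotoneOn_mul_cos_add_mul {K : ℝ} (hK : 0 < K) (P : ℝ) :
    MonotoneOn (fun x => K * cos x + P * x) (Icc (-(π / 2)) (arcsin (P / K))) := by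
  have hderiv (x : ℝ) : HasDerivAt (fun x => K * cos x + P * x) (K * -sin x + P * 1) x :=
    ((hasDerivAt_cos x).const_mul K).add ((hasDerivAt_id x).const_mul P)
  refine monotoneOn_of_deriv_nonneg (convex_Icc _ _) (by fun_prop)
    (fun x _ => (hderiv x).differentiableAt.differentiableWithinAt) fun x hx => ?_
  rw [interior_Icc] at hx
  have hsin : sin x < P / K :=
    (lt_arcsin_iff_sin_lt' ⟨hx.1.le, hx.2.trans_le (arcsin_le_pi_div_two _)⟩).1 hx.2
  rw [lt_div_iff₀ hK] at hsin
  rw [(hderiv x).deriv]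
  linarith

theorem mul_cos_arcsin_div {a : ℝ} (ha : 0 < a) (b : ℝ) :
    a * cos (arcsin (b / a)) = √(a ^ 2 - b ^ 2) := by
  rw [cos_arcsin, show a ^ 2 - b ^ 2 = a ^ 2 * (1 - (b / a) ^ 2) by field_simp,
    sqrt_mul (sq_nonneg a), sqrt_sq ha.le]

theorem cyclic_energy_barrier_ge_tree_barrier_general
    (N : ℕ) (hN : 4 < N)
    (K P : ℝ) (hK : 0 < K)
    (θh₁ θh₂ : ℝ)
    (h₁ : θh₁ ∈ Set.Icc (-(π / 2)) (Real.arcsin (P / (2 * K))))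
    (h₂ : θh₂ ∈ Set.Icc (-(π / 2)) (-Real.arcsin (P / (2 * K)))) :
    -(K * (N : ℝ) / 2) * (Real.cos θh₁ - Real.cos (Real.arcsin (P / (2 * K)))) -
        (K * (N : ℝ) / 2) * (Real.cos θh₂ - Real.cos (-Real.arcsin (P / (2 * K)))) +
        2 * K * Real.cos θh₁ -
        ((N : ℝ) * P / 4) *
          ((θh₁ - Real.arcsin (P / (2 * K))) - (θh₂ - (-Real.arcsin (P / (2 * K))))) +
        (θh₁ - π / 2) * P
      ≥ Real.sqrt (4 * K ^ 2 - P ^ 2) + P * (Real.arcsin (P / (2 * K)) - π / 2) := by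
  have h2K : 0 < 2 * K := by positivity
  set θ₁ := arcsin (P / (2 * K))
  have hu : 2 * K * cos θh₁ + P * θh₁ ≤ 2 * K * cos θ₁ + P * θ₁ :=
    monotoneOn_mul_cos_add_mul h2K P h₁ ⟨h₁.1.trans h₁.2, le_rfl⟩ h₁.2
  have hw : 2 * K * cos θh₂ + -P * θh₂ ≤ 2 * K * cos (-θ₁) + -P * -θ₁ := by
    have := monotoneOn_mul_cos_add_mul h2K (-P)
    rw [neg_div, arcsin_neg] at this
    exact this h₂ ⟨h₂.1.trans h₂.2, le_rfl⟩ h₂.2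
  have hN4 : (4 : ℝ) ≤ N := by exact_mod_cast hN.le
  rw [cos_neg] at hw ⊢
  rw [show 4 * K ^ 2 = (2 * K) ^ 2 by ring, ← mul_cos_arcsin_div h2K]
  linarith [mul_le_mul_of_nonneg_left hu (sub_nonneg.2 hN4),
    mul_le_mul_of_nonneg_left hw (Nat.cast_nonneg (α := ℝ) N)]

/-- Let `N > 4` be even, `K > 0`, `0 ≤ P < 2K`, `θ₁ = arcsin(P/(2K))`,
`θ₂ = −θ₁`. For any `θ̂₁ ∈ [−π/2, θ₁]` and `θ̂₂ ∈ [−π/2, θ₂]`, the energy barrier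
`ΔV_I = −(KN/2)(cos θ̂₁ − cos θ₁) − (KN/2)(cos θ̂₂ − cos θ₂) + 2K cos θ̂₁
  − (NP/4)((θ̂₁ − θ₁) − (θ̂₂ − θ₂)) + (θ̂₁ − π/2)P`
satisfies `ΔV_I ≥ √(4K² − P²) + P·(arcsin(P/(2K)) − π/2)`, the tree-network barrier for
the same line load `P/2`. -/
theorem cyclic_energy_barrier_ge_tree_barrier
    (N : ℕ) (hN : 4 < N) (hNeven : Even N)
    (K P : ℝ) (hK : 0 < K) (hP0 : 0 ≤ P) (hP : P < 2 * K)
    (θh₁ θh₂ : ℝ)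
    (h₁ : θh₁ ∈ Set.Icc (-(π / 2)) (Real.arcsin (P / (2 * K))))
    (h₂ : θh₂ ∈ Set.Icc (-(π / 2)) (-Real.arcsin (P / (2 * K)))) :
    -(K * (N : ℝ) / 2) * (Real.cos θh₁ - Real.cos (Real.arcsin (P / (2 * K)))) -
        (K * (N : ℝ) / 2) * (Real.cos θh₂ - Real.cos (-Real.arcsin (P / (2 * K)))) +
        2 * K * Real.cos θh₁ -
        ((N : ℝ) * P / 4) *
          ((θh₁ - Real.arcsin (P / (2 * K))) - (θh₂ - (-Real.arcsin (P / (2 * K))))) +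
        (θh₁ - π / 2) * P
      ≥ Real.sqrt (4 * K ^ 2 - P ^ 2) + P * (Real.arcsin (P / (2 * K)) - π / 2) :=
  cyclic_energy_barrier_ge_tree_barrier_general N hN K P hK θh₁ θh₂ h₁ h₂
end

section
/- Let N > 4 be even and K > 0, and suppose K·sin(2π/N) ≤ P ≤ 2K. Then there exists θ̂₁ ∈ [0, π/2] satisfying the type-1 saddle equation for m = 0, namely 2K·cos(2θ̂₁/N − π/N)·sin((1 − 2/N)·θ̂₁ + π/N) = P. -/
open Real

/-! The left-hand side is continuous in `θ`, equals `K·sin(2π/N)` at `θ = 0` (double-angle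
formula) and `2K` at `θ = π/2`, so the intermediate value theorem gives a root on `[0, π/2]`. -/

noncomputable def type1SaddleMap (K n θ : ℝ) : ℝ :=
  2 * K * cos (2 * θ / n - π / n) * sin ((1 - 2 / n) * θ + π / n)

theorem continuous_type1SaddleMap (K n : ℝ) : Continuous (type1SaddleMap K n) := by
  unfold type1SaddleMap
  fun_prop

theorem type1SaddleMap_zero (K n : ℝ) : type1SaddleMap K n 0 = K * sin (2 * π / n) := by
  rw [type1SaddleMap, show 2 * π / n = 2 * (π / n) by ring, sin_two_mul,
    show 2 * (0 : ℝ) / n - π / n = -(π / n) by ring, cos_neg,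
    show (1 - 2 / n) * 0 + π / n = π / n by ring]
  ring

theorem type1SaddleMap_pi_div_two (K n : ℝ) : type1SaddleMap K n (π / 2) = 2 * K := by
  rw [type1SaddleMap, show 2 * (π / 2) / n - π / n = 0 by ring,
    show (1 - 2 / n) * (π / 2) + π / n = π / 2 by ring, cos_zero, sin_pi_div_two, mul_one,
    mul_one]

theorem type1_saddle_exists_general
    (N : ℕ) (K P : ℝ)
    (hlow : K * Real.sin (2 * π / N) ≤ P) (hhigh : P ≤ 2 * K) :
    ∃ θ ∈ Set.Icc (0 : ℝ) (π / 2),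
      2 * K * Real.cos (2 * θ / N - π / N) *
        Real.sin ((1 - 2 / (N : ℝ)) * θ + π / N) = P := by
  have hP : P ∈ Set.Icc (type1SaddleMap K N 0) (type1SaddleMap K N (π / 2)) := by
    rw [type1SaddleMap_zero, type1SaddleMap_pi_div_two]
    exact ⟨hlow, hhigh⟩
  exact intermediate_value_Icc (by positivity) (continuous_type1SaddleMap K N).continuousOn hP

/-- Let `N > 4` be even, `K > 0`, and `K·sin(2π/N) ≤ P ≤ 2K`. Then there
exists `θ̂₁ ∈ [0, π/2]` satisfying the type-1 saddle equation for `m = 0`: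
`2K·cos(2θ̂₁/N − π/N)·sin((1 − 2/N)·θ̂₁ + π/N) = P`. -/
theorem type1_saddle_exists
    (N : ℕ) (hN : 4 < N) (hNeven : Even N) (K P : ℝ) (hK : 0 < K)
    (hlow : K * Real.sin (2 * π / N) ≤ P) (hhigh : P ≤ 2 * K) :
    ∃ θ ∈ Set.Icc (0 : ℝ) (π / 2),
      2 * K * Real.cos (2 * θ / N - π / N) *
        Real.sin ((1 - 2 / (N : ℝ)) * θ + π / N) = P :=
  type1_saddle_exists_general N K P hlow hhigh
end

section
/- Let K > 0 and 0 < P < 2K, and for each even N > 4 let θ̂₁(N) ∈ [0, π/2] satisfy the type-1 saddle equation 2K·cos(2θ̂₁(N)/N − π/N)·sin((1 − 2/N)·θ̂₁(N) + π/N) = P, and suppose θ̂₁(N) → arcsin(P/(2K)) as N → ∞. Then lim_{N→∞} N·(θ̂₁(N) − arcsin(P/(2K))) = −π + 2·arcsin(P/(2K)); i.e. θ̂₁(N) = arcsin(P/(2K)) + (1/N)·(−π + 2·arcsin(P/(2K))) + o(1/N). -/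
open Real Filter Topology Asymptotics

/-!
Put `u = (2θ - π) / N`. The saddle equation becomes `cos u · sin (θ - u) = sin α` with
`α = arcsin (P / (2K))`, so `sin (θ - u) - sin α = sin (θ - u) (1 - cos u) = O(u²)`; since
`sin' α = cos α ≠ 0` and `θ - u → α`, also `θ - u - α = O(u²)`. Finally `N u² = (2θ - π) u → 0`,
hence `N (θ - α) = N (θ - u - α) + (2θ - π) → 2α - π`.
-/

lemma isBigO_sub_of_cos_mul_sin_eq {ι : Type*} {l : Filter ι} {u φ : ι → ℝ} {α : ℝ}
    (hα : cos α ≠ 0) (hφ : Tendsto φ l (𝓝 α))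
    (heq : ∀ᶠ i in l, cos (u i) * sin (φ i) = sin α) :
    (fun i => φ i - α) =O[l] fun i => u i ^ 2 := by
  have hsin : (fun i => φ i - α) =O[l] fun i => sin (φ i) - sin α :=
    ((hasDerivAt_sin α).isTheta_sub hα).isBigO_symm.comp_tendsto
      (hφ.prodMk tendsto_const_pure)
  refine hsin.trans (IsBigO.of_bound 2⁻¹ ?_)
  filter_upwards [heq] with i hi
  have hsin_sub : sin (φ i) - sin α = sin (φ i) * (1 - cos (u i)) := by rw [← hi]; ring
  calc ‖sin (φ i) - sin α‖ = |sin (φ i)| * (1 - cos (u i)) := by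
        rw [hsin_sub, norm_mul, norm_of_nonneg (sub_nonneg.2 (cos_le_one _)), norm_eq_abs]
    _ ≤ 1 * (u i ^ 2 / 2) := by
        gcongr
        · exact sub_nonneg.2 (cos_le_one _)
        · exact abs_sin_le_one _
        · linarith [one_sub_sq_div_two_le_cos (x := u i)]
    _ = 2⁻¹ * ‖u i ^ 2‖ := by rw [norm_of_nonneg (sq_nonneg _)]; ring

section NatCastDiv

variable {l : Filter ℕ} {x : ℕ → ℝ} {c : ℝ}

lemma tendsto_div_natCast_nhds_zero (hl : l ≤ atTop) (hx : Tendsto x l (𝓝 c)) :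
    Tendsto (fun N : ℕ => x N / N) l (𝓝 0) := by
  have h := hx.mul (tendsto_one_div_atTop_nhds_zero_nat.mono_left hl)
  rw [mul_zero] at h
  exact h.congr fun N => (div_eq_mul_one_div _ _).symm

lemma tendsto_natCast_mul_div_natCast_sq (hl : l ≤ atTop) (hx : Tendsto x l (𝓝 c)) :
    Tendsto (fun N : ℕ => (N : ℝ) * (x N / N) ^ 2) l (𝓝 0) := by
  have h := hx.mul (tendsto_div_natCast_nhds_zero hl hx)
  rw [mul_zero] at h
  refine h.congr fun N => ?_
  rcases eq_or_ne (N : ℝ) 0 with hN | hN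
  · simp [hN]
  · field_simp

end NatCastDiv

lemma cos_mul_sin_saddle_eq {N : ℝ} (hN : N ≠ 0) (t : ℝ) :
    cos (2 * t / N - π / N) * sin ((1 - 2 / N) * t + π / N) =
      cos ((2 * t - π) / N) * sin (t - (2 * t - π) / N) := by
  congr 2 <;> field_simp
  ring

/-- Let `K > 0`, `0 < P < 2K`, and for each even `N > 4` let
`θ̂₁(N) ∈ [0, π/2]` satisfy the type-1 saddle equation
`2K·cos(2θ̂₁(N)/N − π/N)·sin((1 − 2/N)·θ̂₁(N) + π/N) = P`, and suppose
`θ̂₁(N) → arcsin(P/(2K))` as `N → ∞` (through even `N > 4`). Then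
`N·(θ̂₁(N) − arcsin(P/(2K))) → −π + 2·arcsin(P/(2K))`, i.e.
`θ̂₁(N) = arcsin(P/(2K)) + (1/N)(−π + 2 arcsin(P/(2K))) + o(1/N)`. -/
theorem type1_saddle_asymptotics
    (K P : ℝ) (hK : 0 < K) (hP0 : 0 < P) (hP : P < 2 * K)
    (θ : ℕ → ℝ)
    (hθ : ∀ N : ℕ, Even N → 4 < N →
      θ N ∈ Set.Icc (0 : ℝ) (π / 2) ∧
      2 * K * Real.cos (2 * θ N / N - π / N) *
        Real.sin ((1 - 2 / (N : ℝ)) * θ N + π / N) = P)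
    (hconv : Tendsto θ (atTop ⊓ Filter.principal {N : ℕ | Even N ∧ 4 < N})
      (nhds (Real.arcsin (P / (2 * K))))) :
    Tendsto (fun N : ℕ => (N : ℝ) * (θ N - Real.arcsin (P / (2 * K))))
      (atTop ⊓ Filter.principal {N : ℕ | Even N ∧ 4 < N})
      (nhds (-π + 2 * Real.arcsin (P / (2 * K)))) := by
  set l := atTop ⊓ 𝓟 {N : ℕ | Even N ∧ 4 < N}
  set x := P / (2 * K)
  set α := arcsin x
  have hx0 : 0 < x := by positivity
  have hx1 : x < 1 := (div_lt_one (by positivity)).2 hP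
  have hcos : cos α ≠ 0 := (cos_pos_of_mem_Ioo
    ⟨neg_pi_div_two_lt_arcsin.2 (by linarith), arcsin_lt_pi_div_two.2 hx1⟩).ne'
  have hlarge : ∀ᶠ N in l, Even N ∧ 4 < N := eventually_inf_principal.2 (.of_forall fun _ => id)
  have hnum : Tendsto (fun N => 2 * θ N - π) l (𝓝 (2 * α - π)) := (hconv.const_mul 2).sub_const π
  set u : ℕ → ℝ := fun N => (2 * θ N - π) / N
  have hu : Tendsto u l (𝓝 0) := tendsto_div_natCast_nhds_zero inf_le_left hnum
  have heq : ∀ᶠ N in l, cos (u N) * sin (θ N - u N) = sin α := by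
    filter_upwards [hlarge] with N ⟨hev, h4⟩
    have hN : (N : ℝ) ≠ 0 := Nat.cast_ne_zero.2 (by omega)
    rw [sin_arcsin (by linarith) hx1.le, eq_div_iff (by positivity), ← (hθ N hev h4).2,
      mul_assoc (2 * K), cos_mul_sin_saddle_eq hN]
    ring
  have hkey : Tendsto (fun N : ℕ => (N : ℝ) * (θ N - u N - α)) l (𝓝 0) :=
    ((isBigO_refl (fun N : ℕ => (N : ℝ)) l).mul
      (isBigO_sub_of_cos_mul_sin_eq hcos (by simpa using hconv.sub hu) heq)).trans_tendsto
      (tendsto_natCast_mul_div_natCast_sq inf_le_left hnum)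
  refine (by simpa [add_comm, sub_eq_add_neg] using hkey.add hnum :
    Tendsto _ l (𝓝 (-π + 2 * α))).congr' ?_
  filter_upwards [hlarge] with N ⟨_, h4⟩
  have hN : (N : ℝ) ≠ 0 := Nat.cast_ne_zero.2 (by omega)
  simp only [u]
  field_simp
  ring
end

section
/- Let N > 4 be even, K > 0, and let m be an integer with |2m − 1| ≤ (N − 2)/2; set θ̂ = (2m − 1)π/(N − 2) and define the region I = { θ ∈ ℝ^N : θ_i ∈ [θ̂, π − θ̂] for all i and Σ_{i=1}^N θ_i = 2πm }. Then I is positively invariant for the gradient flow θ̇_i = −2K·sin θ_i + K·sin θ_{i−1} + K·sin θ_{i+1} (indices mod N): every differentiable solution θ : [0, ∞) → ℝ^N of this system with θ(0) ∈ I satisfies θ(t) ∈ I for all t ≥ 0. -/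
open Real Set Finset Filter Asymptotics

/-!
The sum `∑ θᵢ` is conserved because the coupling terms telescope around the cycle. For the lower
bound use the Lyapunov function `F = ∑ ((θ̂ - θᵢ)⁺)²`, which is `C¹` and vanishes at `t = 0`.
With `U = ∑ (θ̂ - θⱼ)⁺`, the conserved sum gives `θⱼ ≤ π - θ̂ + U`; since `sin` is 1-Lipschitz and
`sin ≥ sin θ̂` on `[θ̂, π - θ̂]` (as `θ̂ ≥ -π/2`), this yields `sin θⱼ ≥ sin θ̂ - 2U` for all `j`.
So a coordinate below `θ̂` decreases at rate at most `6KU`, whence `F' ≤ 12KU² ≤ 12KN·F` and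
Gronwall forces `F ≡ 0`. The upper bound `θᵢ ≤ π - θ̂` then follows from the sum constraint,
because `(N - 1)θ̂ + (π - θ̂) = 2πm`.
-/

lemma abs_posPart_sq_sub_sub_le (x y : ℝ) :
    |y⁺ ^ 2 - x⁺ ^ 2 - 2 * x⁺ * (y - x)| ≤ (y - x) ^ 2 := by
  rcases le_total 0 x with hx | hx <;> rcases le_total 0 y with hy | hy <;>
    simp only [posPart_eq_self.2, posPart_eq_zero.2, hx, hy] <;>
    rw [abs_le] <;> constructor <;> nlinarith

lemma hasDerivAt_posPart_sq (x : ℝ) : HasDerivAt (fun y : ℝ => y⁺ ^ 2) (2 * x⁺) x := by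
  rw [hasDerivAt_iff_isLittleO_nhds_zero]
  refine IsBigO.trans_isLittleO ?_ (isLittleO_pow_id one_lt_two)
  refine IsBigO.of_bound 1 (Eventually.of_forall fun h => ?_)
  simpa [Real.norm_eq_abs, smul_eq_mul, mul_comm] using abs_posPart_sq_sub_sub_le x (x + h)

theorem eq_zero_of_hasDerivWithinAt_le_mul {f f' : ℝ → ℝ} {a C : ℝ}
    (hf : ∀ t ∈ Ici a, HasDerivWithinAt f (f' t) (Ici a) t)
    (hf' : ∀ t ∈ Ici a, f' t ≤ C * f t) (hfa : f a = 0) (hnonneg : ∀ t ∈ Ici a, 0 ≤ f t)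
    {t : ℝ} (ht : a ≤ t) : f t = 0 := by
  have hle := le_gronwallBound_of_liminf_deriv_right_le (δ := 0) (ε := 0) (b := t)
    (fun x hx => (hf x hx.1).continuousWithinAt.mono Icc_subset_Ici_self)
    (fun x hx r hr => ((hf x hx.1).mono (Ici_subset_Ici.2 hx.1)).liminf_right_slope_le hr)
    hfa.le (fun x hx => by simpa using hf' x hx.1) t ⟨ht, le_rfl⟩
  rw [gronwallBound_ε0_δ0] at hle
  exact hle.antisymm (hnonneg t ht)

theorem eq_of_hasDerivWithinAt_zero {f : ℝ → ℝ} {a : ℝ}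
    (hf : ∀ t ∈ Ici a, HasDerivWithinAt f 0 (Ici a) t) {t : ℝ} (ht : a ≤ t) : f t = f a :=
  constant_of_has_deriv_right_zero
    (fun x hx => (hf x hx.1).continuousWithinAt.mono Icc_subset_Ici_self)
    (fun x hx => (hf x hx.1).mono (Ici_subset_Ici.2 hx.1)) t ⟨ht, le_rfl⟩

lemma sub_le_sum_posPart_sub {ι : Type*} [Fintype ι] {x : ι → ℝ} {a b : ℝ}
    (hsum : ∑ i, x i ≤ (Fintype.card ι - 1) * a + b) (j : ι) :
    x j - b ≤ ∑ i, (a - x i)⁺ := by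
  have hj : x j - a ≤ ∑ i, (x i - a + (a - x i)⁺) :=
    (le_add_of_nonneg_right (posPart_nonneg _)).trans <|
      single_le_sum (f := fun i => x i - a + (a - x i)⁺)
        (fun i _ => by linarith [le_posPart (a - x i)]) (mem_univ j)
  rw [sum_add_distrib, sum_sub_distrib, sum_const, card_univ, nsmul_eq_mul] at hj
  linarith

lemma sin_sub_posPart_sub_posPart_le {a : ℝ} (ha : -(π / 2) ≤ a) (x : ℝ) :
    sin a - (a - x)⁺ - (x - (π - a))⁺ ≤ sin x := by
  have hlip := abs_le.1 (abs_sin_sub_sin_le x a)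
  have hlip' := abs_le.1 (abs_sin_sub_sin_le x (π - a))
  rw [sin_pi_sub] at hlip'
  rcases lt_or_ge x a with hxa | hax
  · linarith [le_posPart (a - x), posPart_nonneg (x - (π - a)), abs_of_neg (sub_neg.2 hxa)]
  rcases le_or_gt x (π - a) with hxb | hbx
  · have : sin a ≤ sin x := by
      rcases le_total x (π / 2) with h | h
      · exact sin_le_sin_of_le_of_le_pi_div_two ha h hax
      · rw [← sin_pi_sub x]
        exact sin_le_sin_of_le_of_le_pi_div_two ha (by linarith) (by linarith)
    linarith [posPart_nonneg (a - x), posPart_nonneg (x - (π - a))]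
  · linarith [le_posPart (x - (π - a)), posPart_nonneg (a - x), abs_of_pos (sub_pos.2 hbx)]

noncomputable def saddleAngle (N : ℕ) (m : ℤ) : ℝ := (2 * (m : ℝ) - 1) * π / ((N : ℝ) - 2)

lemma neg_pi_div_two_le_saddleAngle {N : ℕ} {m : ℤ} (hN : 2 < N)
    (hm : |2 * (m : ℝ) - 1| ≤ ((N : ℝ) - 2) / 2) : -(π / 2) ≤ saddleAngle N m := by
  have hN2 : (0 : ℝ) < N - 2 := by
    have : (2 : ℝ) < N := by exact_mod_cast hN
    linarith
  rw [saddleAngle, le_div_iff₀ hN2]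
  nlinarith [pi_pos, (abs_le.1 hm).1]

lemma sub_one_mul_saddleAngle_add_pi_sub_saddleAngle {N : ℕ} {m : ℤ} (hN : 2 < N) :
    (N - 1) * saddleAngle N m + (π - saddleAngle N m) = 2 * π * m := by
  have hN2 : (N : ℝ) - 2 ≠ 0 := by
    have : (2 : ℝ) < N := by exact_mod_cast hN
    linarith
  rw [saddleAngle]
  field_simp
  ring

section CycleFlow

variable {N : ℕ} [NeZero N]

noncomputable def cycleFlow (K : ℝ) (x : Fin N → ℝ) (i : Fin N) : ℝ :=
  -2 * K * sin (x i) + K * sin (x (i - 1)) + K * sin (x (i + 1))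

lemma sum_cycleFlow (K : ℝ) (x : Fin N → ℝ) : ∑ i, cycleFlow K x i = 0 := by
  have hprev := Fintype.sum_equiv (Equiv.subRight (1 : Fin N)) (fun i => sin (x (i - 1)))
    (fun i => sin (x i)) fun _ => rfl
  have hnext := Fintype.sum_equiv (Equiv.addRight (1 : Fin N)) (fun i => sin (x (i + 1)))
    (fun i => sin (x i)) fun _ => rfl
  simp only [cycleFlow, sum_add_distrib, ← mul_sum, hprev, hnext]
  ring

lemma posPart_sub_mul_neg_cycleFlow_le {K a : ℝ} (hK : 0 ≤ K) (ha : -(π / 2) ≤ a)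
    {x : Fin N → ℝ} (hsum : ∑ j, x j = (N - 1) * a + (π - a)) (i : Fin N) :
    (a - x i)⁺ * -cycleFlow K x i ≤ (a - x i)⁺ * (6 * K * ∑ j, (a - x j)⁺) := by
  set U := ∑ j, (a - x j)⁺
  have hdeficit (j : Fin N) : (a - x j)⁺ ≤ U :=
    single_le_sum (f := fun j => (a - x j)⁺) (fun j _ => posPart_nonneg _) (mem_univ j)
  have hexcess (j : Fin N) : (x j - (π - a))⁺ ≤ U :=
    sup_le (sub_le_sum_posPart_sub (by simp [hsum]) j) (sum_nonneg fun j _ => posPart_nonneg _)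
  have hsin (j : Fin N) : sin a - 2 * U ≤ sin (x j) := by
    linarith [sin_sub_posPart_sub_posPart_le ha (x j), hdeficit j, hexcess j]
  rcases (posPart_nonneg (a - x i)).eq_or_lt with hzero | hpos
  · simp [← hzero]
  have hxi : x i < a := by simpa using posPart_pos_iff.1 hpos
  have hsin_i : sin (x i) ≤ sin a + U := by
    linarith [(abs_le.1 (abs_sin_sub_sin_le (x i) a)).2, abs_of_neg (sub_neg.2 hxi),
      le_posPart (a - x i), hdeficit i]
  refine mul_le_mul_of_nonneg_left ?_ hpos.le
  have hprev := hsin (i - 1)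
  have hnext := hsin (i + 1)
  simp only [cycleFlow]
  nlinarith

lemma sum_posPart_sub_mul_neg_cycleFlow_le {K a : ℝ} (hK : 0 ≤ K) (ha : -(π / 2) ≤ a)
    {x : Fin N → ℝ} (hsum : ∑ j, x j = (N - 1) * a + (π - a)) :
    ∑ i, 2 * (a - x i)⁺ * -cycleFlow K x i ≤ 12 * K * N * ∑ i, (a - x i)⁺ ^ 2 := by
  set U := ∑ j, (a - x j)⁺
  have hCS : U ^ 2 ≤ N * ∑ i, (a - x i)⁺ ^ 2 := by
    simpa using sq_sum_le_card_mul_sum_sq (s := univ) (f := fun i => (a - x i)⁺)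
  calc ∑ i, 2 * (a - x i)⁺ * -cycleFlow K x i
      ≤ ∑ i, 2 * ((a - x i)⁺ * (6 * K * U)) := sum_le_sum fun i _ => by
        rw [mul_assoc]
        exact mul_le_mul_of_nonneg_left (posPart_sub_mul_neg_cycleFlow_le hK ha hsum i) two_pos.le
    _ = 12 * K * U ^ 2 := by rw [← mul_sum, ← sum_mul]; ring
    _ ≤ 12 * K * N * ∑ i, (a - x i)⁺ ^ 2 := by
        rw [mul_assoc _ (N : ℝ)]; gcongr

end CycleFlow

lemma HasDerivWithinAt.sum_posPart_sub_sq {ι : Type*} [Fintype ι] {x : ℝ → ι → ℝ} {v : ι → ℝ}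
    {s : Set ℝ} {t : ℝ} (a : ℝ) (hx : ∀ i, HasDerivWithinAt (fun r => x r i) (v i) s t) :
    HasDerivWithinAt (fun r => ∑ i, (a - x r i)⁺ ^ 2) (∑ i, 2 * (a - x t i)⁺ * -v i) s t :=
  HasDerivWithinAt.fun_sum fun i _ => by
    simpa [Function.comp_def, mul_assoc] using
      (hasDerivAt_posPart_sq _).comp_hasDerivWithinAt t ((hx i).const_sub a)

theorem gradient_flow_invariant_region_general
    (N : ℕ) [NeZero N] (hN : 4 < N)
    (K : ℝ) (hK : 0 < K) (m : ℤ)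
    (hm : |2 * (m : ℝ) - 1| ≤ ((N : ℝ) - 2) / 2)
    (θ : ℝ → Fin N → ℝ)
    (hflow : ∀ (i : Fin N), ∀ t ∈ Set.Ici (0 : ℝ),
      HasDerivWithinAt (fun s => θ s i)
        (-2 * K * Real.sin (θ t i) + K * Real.sin (θ t (i - 1)) +
          K * Real.sin (θ t (i + 1))) (Set.Ici (0 : ℝ)) t)
    (h0mem : ∀ i : Fin N,
      θ 0 i ∈ Set.Icc ((2 * (m : ℝ) - 1) * π / ((N : ℝ) - 2))
        (π - (2 * (m : ℝ) - 1) * π / ((N : ℝ) - 2)))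
    (h0sum : ∑ i : Fin N, θ 0 i = 2 * π * m) :
    ∀ t : ℝ, 0 ≤ t →
      (∀ i : Fin N,
        θ t i ∈ Set.Icc ((2 * (m : ℝ) - 1) * π / ((N : ℝ) - 2))
          (π - (2 * (m : ℝ) - 1) * π / ((N : ℝ) - 2))) ∧
      ∑ i : Fin N, θ t i = 2 * π * m := by
  set a := (2 * (m : ℝ) - 1) * π / ((N : ℝ) - 2)
  have ha : -(π / 2) ≤ a := neg_pi_div_two_le_saddleAngle (by omega) hm
  have hsum_a : (N - 1) * a + (π - a) = 2 * π * m :=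
    sub_one_mul_saddleAngle_add_pi_sub_saddleAngle (by omega)
  have hflow' (t : ℝ) (ht : 0 ≤ t) (i : Fin N) :
      HasDerivWithinAt (fun s => θ s i) (cycleFlow K (θ t) i) (Set.Ici 0) t :=
    hflow i t ht
  have hsum (t : ℝ) (ht : 0 ≤ t) : ∑ i, θ t i = 2 * π * m := by
    refine (eq_of_hasDerivWithinAt_zero (f := fun s => ∑ i, θ s i) (fun s hs => ?_) ht).trans h0sum
    simpa [sum_cycleFlow] using HasDerivWithinAt.fun_sum (u := univ) fun i _ => hflow' s hs i
  have hdeficit (t : ℝ) (ht : 0 ≤ t) : ∑ i, (a - θ t i)⁺ ^ 2 = 0 :=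
    eq_zero_of_hasDerivWithinAt_le_mul (C := 12 * K * N)
      (fun s hs => HasDerivWithinAt.sum_posPart_sub_sq a (hflow' s hs))
      (fun s hs => sum_posPart_sub_mul_neg_cycleFlow_le hK.le ha ((hsum s hs).trans hsum_a.symm))
      (by simp [fun i => sub_nonpos.2 (h0mem i).1])
      (fun s _ => sum_nonneg fun i _ => by positivity) ht
  intro t ht
  have hlow (i : Fin N) : a ≤ θ t i := by
    simpa using
      (sum_eq_zero_iff_of_nonneg fun i _ => by positivity).1 (hdeficit t ht) i (mem_univ i)
  refine ⟨fun i => ⟨hlow i, ?_⟩, hsum t ht⟩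
  have hupper := sub_le_sum_posPart_sub (a := a) (b := π - a) (x := θ t)
    (by simp [hsum t ht, hsum_a]) i
  simp [hlow] at hupper
  linarith

/-- Let `N > 4` be even, `K > 0`, and `m ∈ ℤ` with
`|2m − 1| ≤ (N − 2)/2`; set `θ̂ = (2m − 1)π/(N − 2)`. The region
`I = { θ ∈ ℝ^N : θᵢ ∈ [θ̂, π − θ̂] ∀i, Σθᵢ = 2πm }` is positively invariant for the
gradient flow `θ̇ᵢ = −2K sin θᵢ + K sin θ_{i−1} + K sin θ_{i+1}` (indices mod `N`):
every differentiable solution on `[0, ∞)` starting in `I` stays in `I`. -/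
theorem gradient_flow_invariant_region
    (N : ℕ) [NeZero N] (hN : 4 < N) (hNeven : Even N)
    (K : ℝ) (hK : 0 < K) (m : ℤ)
    (hm : |2 * (m : ℝ) - 1| ≤ ((N : ℝ) - 2) / 2)
    (θ : ℝ → Fin N → ℝ)
    (hflow : ∀ (i : Fin N), ∀ t ∈ Set.Ici (0 : ℝ),
      HasDerivWithinAt (fun s => θ s i)
        (-2 * K * Real.sin (θ t i) + K * Real.sin (θ t (i - 1)) +
          K * Real.sin (θ t (i + 1))) (Set.Ici (0 : ℝ)) t)
    (h0mem : ∀ i : Fin N,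
      θ 0 i ∈ Set.Icc ((2 * (m : ℝ) - 1) * π / ((N : ℝ) - 2))
        (π - (2 * (m : ℝ) - 1) * π / ((N : ℝ) - 2)))
    (h0sum : ∑ i : Fin N, θ 0 i = 2 * π * m) :
    ∀ t : ℝ, 0 ≤ t →
      (∀ i : Fin N,
        θ t i ∈ Set.Icc ((2 * (m : ℝ) - 1) * π / ((N : ℝ) - 2))
          (π - (2 * (m : ℝ) - 1) * π / ((N : ℝ) - 2))) ∧
      ∑ i : Fin N, θ t i = 2 * π * m :=
  gradient_flow_invariant_region_general N hN K hK m hm θ hflow h0mem h0sum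
end
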